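/- Let B be a complex Banach space and let T : B → B be a continuous linear operator that factors as T = i ∘ T̃, where T̃ : B → B̃ is a continuous linear operator into a complex Banach space B̃ and i : B̃ → B is a compact continuous linear map. Let F ⊆ B be a closed linear subspace with T(F) ⊆ F, and assume that sup_n sup{‖Tⁿ v‖ : v ∈ F, ‖v‖ ≤ 1} < ∞ and that Tⁿ v → 0 as n → ∞ for every v ∈ F. Then there exist N ∈ ℕ and λ < 1 such that sup{‖T^N v‖ : v ∈ F, ‖v‖ ≤ 1} ≤ λ. -/

import Mathlib

open scoped Topology

/-!
`T = i ∘ T̃` is compact, so its restriction `S` to the closed invariant subspace `F` is a compact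
operator on `F` whose powers are bounded and tend to zero strongly. Bounded powers are
equicontinuous, and an equicontinuous family converging pointwise converges uniformly on compact
sets. On the compact set `closure (S '' closedBall 0 1)` this says `‖S ^ (n + 1)‖ → 0`, so some
power of `S` has norm `< 1`.
-/

open Filter

theorem EquicontinuousOn.tendstoUniformlyOn_of_tendsto {ι X α : Type*} [TopologicalSpace X]
    [UniformSpace α] {F : ι → X → α} {f : X → α} {K : Set X} {l : Filter ι}
    (hK : IsCompact K) (hF : EquicontinuousOn F K) (h : ∀ x ∈ K, Tendsto (F · x) l (𝓝 (f x))) :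
    TendstoUniformlyOn F f l K := by
  have hpointwise : Tendsto ((⋃₀ {K}).domRestrict ∘ F) l (𝓝 ((⋃₀ {K}).domRestrict f)) := by
    rw [Set.sUnion_singleton, tendsto_pi_nhds]
    exact fun x ↦ h x x.2
  have hunif := (EquicontinuousOn.tendsto_uniformOnFun_iff_pi' (𝔖 := {K}) (by simpa)
    (by simp [hF]) l f).2 hpointwise
  exact UniformOnFun.tendsto_iff_tendstoUniformlyOn.1 hunif K rfl

theorem ContinuousLinearMap.coe_pow_restrict_apply {R M : Type*} [Semiring R] [TopologicalSpace M]
    [AddCommMonoid M] [Module R M] {f : M →L[R] M} {p : Submodule R M} (h : ∀ x ∈ p, f x ∈ p)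
    (n : ℕ) (x : p) : ((f.restrict h ^ n) x : M) = (f ^ n) x := by
  induction n with
  | zero => rfl
  | succ n ih => rw [pow_succ', pow_succ']; exact congrArg f ih

theorem IsCompactOperator.tendsto_norm_pow_of_tendsto_pow_apply {𝕜 E : Type*} [RCLike 𝕜]
    [NormedAddCommGroup E] [NormedSpace 𝕜 E] {S : E →L[𝕜] E} (hS : IsCompactOperator S)
    (hbdd : BddAbove (Set.range fun n : ℕ ↦ ‖S ^ n‖))
    (hdecay : ∀ v, Tendsto (fun n : ℕ ↦ (S ^ n) v) atTop (𝓝 0)) :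
    Tendsto (fun n : ℕ ↦ ‖S ^ n‖) atTop (𝓝 0) := by
  have hequi : Equicontinuous fun n : ℕ ↦ ⇑(S ^ n) :=
    ((NormedSpace.equicontinuous_TFAE _).out 7 1).1 hbdd
  have hunif : TendstoUniformlyOn (fun n : ℕ ↦ ⇑(S ^ n)) 0 atTop
      (closure (S '' Metric.closedBall 0 1)) :=
    (hequi.equicontinuousOn _).tendstoUniformlyOn_of_tendsto
      (hS.isCompact_closure_image_closedBall 1) fun v _ ↦ hdecay v
  refine (tendsto_add_atTop_iff_nat 1).1 (Metric.tendsto_nhds.2 fun ε hε ↦ ?_)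
  filter_upwards [Metric.tendstoUniformlyOn_iff.1 hunif (ε / 2) (half_pos hε)] with n hn
  have hle : ‖S ^ (n + 1)‖ ≤ ε / 2 := by
    refine ContinuousLinearMap.opNorm_le_of_unit_norm (half_pos hε).le fun x hx ↦ ?_
    have hSx : S x ∈ closure (S '' Metric.closedBall 0 1) :=
      subset_closure ⟨x, by simp [hx], rfl⟩
    simpa [pow_succ] using (hn (S x) hSx).le
  rw [Real.dist_eq, sub_zero, abs_norm]
  exact hle.trans_lt (half_lt_self hε)

theorem stmt4_general {B Bt : Type*}
    [NormedAddCommGroup B] [NormedSpace ℂ B]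
    [NormedAddCommGroup Bt] [NormedSpace ℂ Bt]
    (T : B →L[ℂ] B) (Tt : B →L[ℂ] Bt) (i : Bt →L[ℂ] B)
    (hi : IsCompactOperator i)
    (hfact : T = i.comp Tt)
    (F : Submodule ℂ B) (hFclosed : IsClosed (F : Set B))
    (hTF : ∀ v ∈ F, T v ∈ F)
    (hbound : ∃ M : ℝ, ∀ n : ℕ, ∀ v ∈ F, ‖v‖ ≤ 1 → ‖(T ^ n) v‖ ≤ M)
    (hdecay : ∀ v ∈ F, Filter.Tendsto (fun n : ℕ => (T ^ n) v) Filter.atTop (𝓝 0)) :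
    ∃ (N : ℕ) (lam : ℝ), lam < 1 ∧ ∀ v ∈ F, ‖v‖ ≤ 1 → ‖(T ^ N) v‖ ≤ lam := by
  obtain ⟨M, hM⟩ := hbound
  have hT : IsCompactOperator T := by rw [hfact]; exact hi.comp_clm Tt
  set S := T.restrict hTF
  have hS : IsCompactOperator S := hT.restrict hTF hFclosed
  have hM0 : 0 ≤ M := (norm_nonneg _).trans (hM 0 0 F.zero_mem (by simp))
  have hbdd : BddAbove (Set.range fun n : ℕ ↦ ‖S ^ n‖) := by
    refine ⟨M, Set.forall_mem_range.2 fun n ↦ ?_⟩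
    refine ContinuousLinearMap.opNorm_le_of_unit_norm hM0 fun v hv ↦ ?_
    rw [Submodule.coe_norm, ContinuousLinearMap.coe_pow_restrict_apply]
    exact hM n v v.2 hv.le
  have hSdecay : ∀ v, Tendsto (fun n : ℕ ↦ (S ^ n) v) atTop (𝓝 0) := fun v ↦
    tendsto_subtype_rng.2 <| (hdecay v v.2).congr fun n ↦
      (ContinuousLinearMap.coe_pow_restrict_apply hTF n v).symm
  obtain ⟨N, hN⟩ := ((hS.tendsto_norm_pow_of_tendsto_pow_apply hbdd hSdecay).eventually
    (gt_mem_nhds one_pos)).exists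
  refine ⟨N, ‖S ^ N‖, hN, fun v hv hv1 ↦ ?_⟩
  calc ‖(T ^ N) v‖ = ‖(S ^ N) ⟨v, hv⟩‖ := by
        rw [Submodule.coe_norm, ContinuousLinearMap.coe_pow_restrict_apply]
    _ ≤ ‖S ^ N‖ * ‖v‖ := (S ^ N).le_opNorm _
    _ ≤ ‖S ^ N‖ := mul_le_of_le_one_right (S ^ N).opNorm_nonneg hv1

theorem stmt4 {B Bt : Type*}
    [NormedAddCommGroup B] [NormedSpace ℂ B] [CompleteSpace B]
    [NormedAddCommGroup Bt] [NormedSpace ℂ Bt] [CompleteSpace Bt]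
    (T : B →L[ℂ] B) (Tt : B →L[ℂ] Bt) (i : Bt →L[ℂ] B)
    (hi : IsCompactOperator i)
    (hfact : T = i.comp Tt)
    (F : Submodule ℂ B) (hFclosed : IsClosed (F : Set B))
    (hTF : ∀ v ∈ F, T v ∈ F)
    (hbound : ∃ M : ℝ, ∀ n : ℕ, ∀ v ∈ F, ‖v‖ ≤ 1 → ‖(T ^ n) v‖ ≤ M)
    (hdecay : ∀ v ∈ F, Filter.Tendsto (fun n : ℕ => (T ^ n) v) Filter.atTop (𝓝 0)) :
    ∃ (N : ℕ) (lam : ℝ), lam < 1 ∧ ∀ v ∈ F, ‖v‖ ≤ 1 → ‖(T ^ N) v‖ ≤ lam :=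
  stmt4_general T Tt i hi hfact F hFclosed hTF hbound hdecay
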